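/- Let d ≥ 2 and let p_1,…,p_d be positive integers with p = max{p_1,…,p_d}. Let P be a family of pairwise disjoint boxes D = [a_1,b_1) × … × [a_d,b_d) with integer endpoints whose union covers [0,p_1) × … × [0,p_d), such that every D ∈ P intersects [0,p_1) × … × [0,p_d) and, for some index j_D depending on D, satisfies b_δ − a_δ = p_δ for all δ ≠ j_D and b_{j_D} − a_{j_D} = 1. Then #P ≤ 2^{d−1}·d·p. (Counting form of Lemma 'cor:overlap-narrow': for a tensor-product B-spline basis of orders p_1,…,p_d with d ≥ 2 and a partition into narrow macro-elements having fewer than p_δ elements in at most one direction, the repetition ratio satisfies R ≤ 2^{d−1}·d·p.) -/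

import Mathlib

open Set

/-- The half-open axis-aligned box `[a₁,b₁) × … × [a_d,b_d)` in `ℝ^d` with integer
endpoints. -/
def boxSet {d : ℕ} (a b : Fin d → ℤ) : Set (Fin d → ℝ) :=
  Set.pi Set.univ fun δ => Set.Ico (a δ : ℝ) (b δ : ℝ)

/-- A chosen narrow direction of a box. -/
noncomputable def narrowDir {d : ℕ} (hd : 0 < d) (p : Fin d → ℕ)
    (D : (Fin d → ℤ) × (Fin d → ℤ)) : Fin d :=
  if h : ∃ j : Fin d, D.2 j - D.1 j = 1 ∧ ∀ δ ≠ j, D.2 δ - D.1 δ = (p δ : ℤ)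
  then h.choose else ⟨0, hd⟩

lemma narrowDir_spec {d : ℕ} (hd : 0 < d) (p : Fin d → ℕ)
    (D : (Fin d → ℤ) × (Fin d → ℤ))
    (h : ∃ j : Fin d, D.2 j - D.1 j = 1 ∧ ∀ δ ≠ j, D.2 δ - D.1 δ = (p δ : ℤ)) :
    D.2 (narrowDir hd p D) - D.1 (narrowDir hd p D) = 1 ∧
      ∀ δ ≠ narrowDir hd p D, D.2 δ - D.1 δ = (p δ : ℤ) := by
  rw [narrowDir, dif_pos h]
  exact h.choose_spec

lemma filter_bool_card {d : ℕ} (hd : 1 ≤ d) (j : Fin d) :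
    (Finset.univ.filter fun s : Fin d → Bool => s j = true).card = 2 ^ (d - 1) := by
  classical
  have hAB : (Finset.univ.filter fun s : Fin d → Bool => s j = true).card =
      (Finset.univ.filter fun s : Fin d → Bool => s j = false).card := by
    apply Finset.card_bij' (fun s _ => Function.update s j false)
      (fun s _ => Function.update s j true)
    · intro s hs
      simp only [Finset.mem_filter, Finset.mem_univ, true_and] at hs
      rw [Function.update_idem, ← hs, Function.update_eq_self]
    · intro s hs
      simp only [Finset.mem_filter, Finset.mem_univ, true_and] at hs
      rw [Function.update_idem, ← hs, Function.update_eq_self]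
    · intro s hs
      simp [Function.update_self]
    · intro s hs
      simp [Function.update_self]
  have hsum : (Finset.univ.filter fun s : Fin d → Bool => s j = true).card +
      (Finset.univ.filter fun s : Fin d → Bool => s j = false).card = 2 ^ d := by
    have := Finset.card_filter_add_card_filter_not
      (s := (Finset.univ : Finset (Fin d → Bool))) (p := fun s => s j = true)
    simp only [Bool.not_eq_true] at this
    rw [this, Finset.card_univ, Fintype.card_fun, Fintype.card_fin, Fintype.card_bool]
  rw [← hAB] at hsum
  have h2 : 2 ^ d = 2 * 2 ^ (d - 1) := by
    rw [← pow_succ']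
    exact congrArg (2 ^ ·) (Nat.sub_add_cancel hd).symm
  clear hAB
  generalize hk : (Finset.univ.filter fun s : Fin d → Bool => s j = true).card = k at hsum ⊢
  clear hk
  omega

/-- Counting form of Lemma `cor:overlap-narrow`: for `d ≥ 2` and a family `P` of pairwise
disjoint boxes with integer endpoints covering `[0,p₁) × … × [0,p_d)`, each intersecting
it, and each of size `p_δ` in every direction except one direction `j_D` (depending on the
box) in which it has size `1`, we have `#P ≤ 2^{d−1}·d·p` with `p = max{p₁,…,p_d}`. -/
theorem card_narrow_cover_le_max {d : ℕ} (hd : 2 ≤ d) (p : Fin d → ℕ) (hp : ∀ δ, 0 < p δ)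
    (P : Finset ((Fin d → ℤ) × (Fin d → ℤ)))
    (hdisj : (P : Set ((Fin d → ℤ) × (Fin d → ℤ))).Pairwise fun D E =>
      Disjoint (boxSet D.1 D.2) (boxSet E.1 E.2))
    (hmeet : ∀ D ∈ P,
      (boxSet D.1 D.2 ∩ boxSet (fun _ => 0) (fun δ => (p δ : ℤ))).Nonempty)
    (hcover : boxSet (fun _ => 0) (fun δ => (p δ : ℤ)) ⊆
      ⋃ D ∈ P, boxSet D.1 D.2)
    (hnarrow : ∀ D ∈ P, ∃ j : Fin d,
      D.2 j - D.1 j = 1 ∧ ∀ δ ≠ j, D.2 δ - D.1 δ = (p δ : ℤ)) :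
    P.card ≤ 2 ^ (d - 1) * d * Finset.univ.sup p := by
  classical
  have hd0 : 0 < d := by omega
  set pmax := Finset.univ.sup p with hpmax
  -- basic per-box integer facts from hmeet
  have hbasic : ∀ D ∈ P, ∀ δ, D.1 δ < (p δ : ℤ) ∧ 0 < D.2 δ := by
    intro D hD δ
    obtain ⟨y, hy1, hy2⟩ := hmeet D hD
    simp only [boxSet, Set.mem_univ_pi, Set.mem_Ico] at hy1 hy2
    obtain ⟨ha, hb⟩ := hy1 δ
    obtain ⟨h0, hpδ⟩ := hy2 δ
    constructor
    · exact_mod_cast lt_of_le_of_lt ha hpδ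
    · exact_mod_cast lt_of_le_of_lt h0 hb
  -- fiberwise decomposition along narrowDir
  rw [Finset.card_eq_sum_card_fiberwise (f := narrowDir hd0 p) (t := Finset.univ)
    (fun D _ => Finset.mem_univ _)]
  have hfib : ∀ j : Fin d,
      (P.filter fun D => narrowDir hd0 p D = j).card ≤ 2 ^ (d - 1) * pmax := by
    intro j
    have hcardT : ((Finset.univ.filter fun s : Fin d → Bool => s j = true) ×ˢ
        Finset.Ico (0 : ℤ) (pmax : ℤ)).card = 2 ^ (d - 1) * pmax := by
      rw [Finset.card_product, filter_bool_card (by omega) j, Int.card_Ico]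
      simp
    rw [← hcardT]
    apply Finset.card_le_card_of_injOn
      (fun D => ((fun δ => decide (0 ≤ D.1 δ)), D.1 j))
    · intro D hD
      simp only [Finset.mem_coe, Finset.mem_filter] at hD
      obtain ⟨hDP, hDj⟩ := hD
      obtain ⟨hnj, hwide⟩ := narrowDir_spec hd0 p D (hnarrow D hDP)
      rw [hDj] at hnj hwide
      have h1 : D.1 j < (p j : ℤ) := (hbasic D hDP j).1
      have h2 : 0 < D.2 j := (hbasic D hDP j).2
      have h0 : 0 ≤ D.1 j := by
        have h3 : (0 : ℤ) + 1 ≤ D.2 j := Int.add_one_le_iff.mpr h2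
        linarith
      have hpj : (p j : ℤ) ≤ (pmax : ℤ) := by
        exact_mod_cast Nat.cast_le.mpr (Finset.le_sup (Finset.mem_univ j))
      simp only [Finset.mem_coe, Finset.mem_product, Finset.mem_filter, Finset.mem_univ, true_and,
        Finset.mem_Ico]
      exact ⟨by simp [h0], h0, lt_of_lt_of_le h1 hpj⟩
    · intro D hD E hE heq
      simp only [Finset.mem_coe, Finset.mem_filter] at hD hE
      obtain ⟨hDP, hDj⟩ := hD
      obtain ⟨hEP, hEj⟩ := hE
      by_contra hne
      simp only [Prod.mk.injEq] at heq
      obtain ⟨hsign, haj⟩ := heq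
      have hsign' : ∀ δ, (0 ≤ D.1 δ ↔ 0 ≤ E.1 δ) := by
        intro δ
        have := congrFun hsign δ
        simpa using this
      obtain ⟨hnjD, hwideD⟩ := narrowDir_spec hd0 p D (hnarrow D hDP)
      obtain ⟨hnjE, hwideE⟩ := narrowDir_spec hd0 p E (hnarrow E hEP)
      rw [hDj] at hnjD hwideD
      rw [hEj] at hnjE hwideE
      -- common point
      set x : Fin d → ℝ := fun δ => ((max (D.1 δ) (E.1 δ) : ℤ) : ℝ) with hx
      have key : ∀ δ, max (D.1 δ) (E.1 δ) < D.2 δ ∧ max (D.1 δ) (E.1 δ) < E.2 δ := by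
        intro δ
        by_cases hδ : δ = j
        · subst hδ
          rw [haj, max_self]
          constructor <;> linarith
        · have hD2 : D.2 δ = D.1 δ + (p δ : ℤ) := by
            have := hwideD δ hδ; linarith
          have hE2 : E.2 δ = E.1 δ + (p δ : ℤ) := by
            have := hwideE δ hδ; linarith
          have hDlt : D.1 δ < (p δ : ℤ) := (hbasic D hDP δ).1
          have hElt : E.1 δ < (p δ : ℤ) := (hbasic E hEP δ).1
          have hD2pos : 0 < D.2 δ := (hbasic D hDP δ).2
          have hE2pos : 0 < E.2 δ := (hbasic E hEP δ).2
          by_cases hs : 0 ≤ D.1 δ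
          · have hs' : 0 ≤ E.1 δ := (hsign' δ).mp hs
            exact ⟨max_lt (by linarith) (by linarith),
              max_lt (by linarith) (by linarith)⟩
          · have hs1 : E.1 δ < 0 := not_le.mp fun h => hs ((hsign' δ).mpr h)
            have hs2 : D.1 δ < 0 := not_le.mp hs
            exact ⟨max_lt (by linarith) (by linarith),
              max_lt (by linarith) (by linarith)⟩
      have hxD : x ∈ boxSet D.1 D.2 := by
        simp only [boxSet, Set.mem_univ_pi, Set.mem_Ico, hx]
        intro δ
        constructor
        · exact_mod_cast le_max_left (D.1 δ) (E.1 δ)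
        · exact_mod_cast (key δ).1
      have hxE : x ∈ boxSet E.1 E.2 := by
        simp only [boxSet, Set.mem_univ_pi, Set.mem_Ico, hx]
        intro δ
        constructor
        · exact_mod_cast le_max_right (D.1 δ) (E.1 δ)
        · exact_mod_cast (key δ).2
      exact Set.disjoint_left.mp (hdisj hDP hEP hne) hxD hxE
  calc ∑ j : Fin d, (P.filter fun D => narrowDir hd0 p D = j).card
      ≤ ∑ _j : Fin d, 2 ^ (d - 1) * pmax := Finset.sum_le_sum fun j _ => hfib j
    _ = d * (2 ^ (d - 1) * pmax) := by
        rw [Finset.sum_const, Finset.card_univ, Fintype.card_fin, smul_eq_mul]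
    _ = 2 ^ (d - 1) * d * pmax := by ring
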